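/- arXiv:2206.06345 — 3 statements merged into one kernel-verified Lean document; each statement's English description precedes it below -/
import Mathlib

section
/- (Theorem 3.1.) Let L be a nonempty set with a partial order ≼ and a multiplicative G_M-metric G such that (L, G) is multiplicative G_M-complete. Let F : L → L, x₀ ∈ L, η ∈ [0,1), γ > 0, and let m be a positive integer. Assume: (i) F x ≼ x for every x ∈ L; (ii) G(Fx, Fy, Fz)^{1/m} ≤ (G(x,y,z)^{1/m})^η for all x, y, z in the closed ball B̄(x₀, γ); (iii) G(x₀, Fx₀, Fx₀) ≤ γ^{1−η}; (iv) whenever a nonincreasing sequence (x_n) multiplicative G_M-converges to a point s, then s ≼ x_n for every n. Then there exists x* ∈ B̄(x₀, γ) with F x* = x* and G(x*, x*, x*) = 1. Moreover, if every two points of B̄(x₀, γ) have a lower bound belonging to B̄(x₀, γ), then x* is the unique fixed point of F in B̄(x₀, γ). -/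
structure IsMultGMetric {Z : Type*} (G : Z → Z → Z → ℝ) : Prop where
  pos : ∀ x y z, 0 < G x y z
  eq_one : ∀ x y z, x = y → y = z → G x y z = 1
  one_lt : ∀ x y, x ≠ y → 1 < G x x y
  le_of_ne : ∀ x y z, y ≠ z → G x x y ≤ G x y z
  perm : ∀ x y z, G x y z = G y z x
  swap : ∀ x y z, G x y z = G x z y
  rect : ∀ x y z t, G x y z ≤ G x t t * G t y z

def GMConv {Z : Type*} (G : Z → Z → Z → ℝ) (x : ℕ → Z) (p : Z) : Prop :=
  ∀ ε : ℝ, 1 < ε → ∃ N : ℕ, ∀ n ≥ N, ∀ m ≥ N, G (x n) (x m) p < ε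

def GMCauchy {Z : Type*} (G : Z → Z → Z → ℝ) (x : ℕ → Z) : Prop :=
  ∀ ε : ℝ, 1 < ε → ∃ N : ℕ, ∀ n ≥ N, ∀ m ≥ N, ∀ l ≥ N, G (x n) (x m) (x l) < ε

def GMComplete {Z : Type*} (G : Z → Z → Z → ℝ) : Prop :=
  ∀ x : ℕ → Z, GMCauchy G x → ∃ p : Z, GMConv G x p

def GMBall {Z : Type*} (G : Z → Z → Z → ℝ) (x₀ : Z) (γ : ℝ) : Set Z :=
  {ρ | G x₀ ρ ρ ≤ γ}

/-!
The Picard iterates `xₙ = Fⁿ x₀` satisfy `G(xₙ, xₙ₊₁, xₙ₊₁) ≤ γ^((1-η)ηⁿ)`: the contraction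
raises the previous bound to the power `η`, and by the rectangular inequality the partial
products `γ^(1-ηⁿ) ≤ γ` keep every iterate inside the ball, where the contraction applies again.
Telescoping gives `G(x_k, x_j, x_j) ≤ γ^(η^k) → 1`, so the orbit is Cauchy; its limit stays in
the closed ball and is fixed since `F` is nonexpansive there. Two fixed points `p, y` in the ball
satisfy `G(p, y, y) ≤ G(p, y, y)^η` with `η < 1`, forcing `G(p, y, y) = 1`, i.e. `p = y`.
-/

open Filter Topology

theorem le_rpow_of_rpow_one_div_le {a b η : ℝ} {m : ℕ} (ha : 0 ≤ a) (hb : 0 ≤ b) (hm : 0 < m)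
    (h : a ^ (1 / (m : ℝ)) ≤ (b ^ (1 / (m : ℝ))) ^ η) : a ≤ b ^ η := by
  rwa [← Real.rpow_mul hb, mul_comm, Real.rpow_mul hb,
    Real.rpow_le_rpow_iff ha (by positivity) (by positivity)] at h

namespace IsMultGMetric

variable {Z : Type*} {G : Z → Z → Z → ℝ}

theorem one_le (hG : IsMultGMetric G) (x y z : Z) : 1 ≤ G x y z := by
  by_cases hyz : y = z
  · subst hyz
    by_cases hxy : x = y
    · exact (hG.eq_one x y y hxy rfl).ge
    · rw [hG.perm]
      exact (hG.one_lt y x (Ne.symm hxy)).le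
  · by_cases hxy : x = y
    · subst hxy
      exact (hG.one_lt x z hyz).le
    · exact (hG.one_lt x y hxy).le.trans (hG.le_of_ne x y z hyz)

theorem eq_of_apply_eq_one (hG : IsMultGMetric G) {x y : Z} (h : G x y y = 1) : x = y := by
  by_contra hxy
  have := hG.one_lt y x (Ne.symm hxy)
  rw [← hG.perm, h] at this
  exact this.false

theorem apply_le_sq (hG : IsMultGMetric G) (x y : Z) : G x y y ≤ G y x x ^ 2 := by
  calc G x y y = G y y x := hG.perm x y y
    _ ≤ G y x x * G x y x := hG.rect y y x x
    _ = G y x x ^ 2 := by rw [hG.perm x y x, sq]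

theorem apply_le_mul_mul (hG : IsMultGMetric G) (x y z t : Z) :
    G x y z ≤ G x t t * (G y t t * G z t t) := by
  have hyz : G t y z ≤ G y t t * G z t t :=
    calc G t y z = G y z t := hG.perm t y z
      _ ≤ G y t t * G t z t := hG.rect y z t t
      _ = G y t t * G z t t := by rw [hG.perm t z t]
  calc G x y z ≤ G x t t * G t y z := hG.rect x y z t
    _ ≤ G x t t * (G y t t * G z t t) := by gcongr; exact (hG.pos x t t).le

theorem apply_le_rpow_of_step_le (hG : IsMultGMetric G) {x : ℕ → Z} {γ η : ℝ} (hγ : 0 < γ)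
    {k j : ℕ} (hkj : k ≤ j)
    (hstep : ∀ i, k ≤ i → i < j → G (x i) (x (i + 1)) (x (i + 1)) ≤ γ ^ ((1 - η) * η ^ i)) :
    G (x k) (x j) (x j) ≤ γ ^ (η ^ k - η ^ j) := by
  induction j, hkj using Nat.le_induction with
  | base => rw [hG.eq_one _ _ _ rfl rfl, sub_self, Real.rpow_zero]
  | succ j hkj ih =>
    calc G (x k) (x (j + 1)) (x (j + 1))
        ≤ G (x k) (x j) (x j) * G (x j) (x (j + 1)) (x (j + 1)) := hG.rect _ _ _ _
      _ ≤ γ ^ (η ^ k - η ^ j) * γ ^ ((1 - η) * η ^ j) := by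
          gcongr
          · exact (hG.pos _ _ _).le
          · exact ih fun i hki hij => hstep i hki (hij.trans j.lt_succ_self)
          · exact hstep j hkj j.lt_succ_self
      _ = γ ^ (η ^ k - η ^ (j + 1)) := by rw [← Real.rpow_add hγ]; ring_nf

theorem mem_gmBall_of_step_le (hG : IsMultGMetric G) {x : ℕ → Z} {γ η : ℝ} (hγ : 1 ≤ γ)
    (hη : 0 ≤ η) {n : ℕ}
    (hstep : ∀ i < n, G (x i) (x (i + 1)) (x (i + 1)) ≤ γ ^ ((1 - η) * η ^ i)) :
    x n ∈ GMBall G (x 0) γ :=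
  (hG.apply_le_rpow_of_step_le (zero_lt_one.trans_le hγ) n.zero_le fun i _ hi => hstep i hi).trans
    (Real.rpow_le_self_of_one_le hγ (by linarith [pow_nonneg hη n, pow_zero η]))

theorem iterate_step_le (hG : IsMultGMetric G) {F : Z → Z} {x₀ : Z} {γ η : ℝ} (hγ : 1 ≤ γ)
    (hη : 0 ≤ η)
    (hF : ∀ a ∈ GMBall G x₀ γ, ∀ b ∈ GMBall G x₀ γ, G (F a) (F b) (F b) ≤ G a b b ^ η)
    (hstart : G x₀ (F x₀) (F x₀) ≤ γ ^ (1 - η)) (n : ℕ) :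
    G (F^[n] x₀) (F^[n + 1] x₀) (F^[n + 1] x₀) ≤ γ ^ ((1 - η) * η ^ n) := by
  induction n using Nat.strong_induction_on with
  | _ n ih =>
    rcases n with _ | k
    · simpa using hstart
    have hmem : ∀ j ≤ k + 1, F^[j] x₀ ∈ GMBall G x₀ γ := fun j hj =>
      hG.mem_gmBall_of_step_le (x := fun n => F^[n] x₀) hγ hη fun i hi => ih i (by omega)
    calc G (F^[k + 1] x₀) (F^[k + 2] x₀) (F^[k + 2] x₀)
        = G (F (F^[k] x₀)) (F (F^[k + 1] x₀)) (F (F^[k + 1] x₀)) := by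
          simp only [Function.iterate_succ_apply']
      _ ≤ G (F^[k] x₀) (F^[k + 1] x₀) (F^[k + 1] x₀) ^ η :=
          hF _ (hmem k k.le_succ) _ (hmem (k + 1) le_rfl)
      _ ≤ (γ ^ ((1 - η) * η ^ k)) ^ η :=
          Real.rpow_le_rpow (hG.pos _ _ _).le (ih k k.lt_succ_self) hη
      _ = γ ^ ((1 - η) * η ^ (k + 1)) := by
          rw [← Real.rpow_mul (by positivity)]; ring_nf

theorem tendsto_of_gmConv (hG : IsMultGMetric G) {x : ℕ → Z} {p : Z} (hx : GMConv G x p) :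
    Tendsto (fun n => G p (x n) (x n)) atTop (𝓝 1) := by
  rw [Metric.tendsto_atTop]
  intro ε hε
  obtain ⟨N, hN⟩ := hx (1 + ε) (by linarith)
  refine ⟨N, fun n hn => ?_⟩
  have hlt : G p (x n) (x n) < 1 + ε := by rw [hG.perm p]; exact hN n hn n hn
  rw [Real.dist_eq, abs_lt]
  constructor <;> linarith [hG.one_le p (x n) (x n)]

theorem gmCauchy_of_le (hG : IsMultGMetric G) {x : ℕ → Z} {b : ℕ → ℝ}
    (hb : Tendsto b atTop (𝓝 1)) (hx : ∀ k j, k ≤ j → G (x k) (x j) (x j) ≤ b k) :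
    GMCauchy G x := by
  intro ε hε
  have hb6 : Tendsto (fun N => b N ^ 6) atTop (𝓝 1) := by simpa using hb.pow 6
  obtain ⟨N, hN⟩ := (hb6.eventually_lt_const hε).exists
  refine ⟨N, fun n hn m hm l hl => ?_⟩
  have hback : ∀ i, N ≤ i → G (x i) (x N) (x N) ≤ b N ^ 2 := fun i hi =>
    (hG.apply_le_sq _ _).trans (pow_le_pow_left₀ (hG.pos _ _ _).le (hx N i hi) 2)
  calc G (x n) (x m) (x l) ≤ G (x n) (x N) (x N) * (G (x m) (x N) (x N) * G (x l) (x N) (x N)) :=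
        hG.apply_le_mul_mul _ _ _ _
    _ ≤ b N ^ 2 * (b N ^ 2 * b N ^ 2) :=
        mul_le_mul (hback n hn) (mul_le_mul (hback m hm) (hback l hl) (hG.pos _ _ _).le
          ((hG.pos _ _ _).le.trans (hback m hm)))
          (mul_pos (hG.pos _ _ _) (hG.pos _ _ _)).le ((hG.pos _ _ _).le.trans (hback n hn))
    _ = b N ^ 6 := by ring
    _ < ε := hN

theorem mem_gmBall_of_gmConv (hG : IsMultGMetric G) {x : ℕ → Z} {p x₀ : Z} {γ : ℝ}
    (hx : ∀ n, x n ∈ GMBall G x₀ γ) (hp : GMConv G x p) : p ∈ GMBall G x₀ γ := by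
  have hlim : Tendsto (fun n => γ * G p (x n) (x n) ^ 2) atTop (𝓝 γ) := by
    simpa using ((hG.tendsto_of_gmConv hp).pow 2).const_mul γ
  refine ge_of_tendsto' hlim fun n => ?_
  calc G x₀ p p ≤ G x₀ (x n) (x n) * G (x n) p p := hG.rect _ _ _ _
    _ ≤ γ * G p (x n) (x n) ^ 2 := by
        gcongr
        · exact (hG.pos _ _ _).le
        · exact zero_le_one.trans ((hG.one_le _ _ _).trans (hx n))
        · exact hx n
        · exact hG.apply_le_sq _ _

theorem map_eq_of_gmConv (hG : IsMultGMetric G) {F : Z → Z} {s : Set Z}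
    (hF : ∀ a ∈ s, ∀ b ∈ s, G (F a) (F b) (F b) ≤ G a b b) {x : ℕ → Z} {p : Z}
    (hxs : ∀ n, x n ∈ s) (hxF : ∀ n, x (n + 1) = F (x n)) (hps : p ∈ s) (hp : GMConv G x p) :
    F p = p := by
  have hconv := hG.tendsto_of_gmConv hp
  have hlim : Tendsto (fun n => G p (x (n + 1)) (x (n + 1)) * G p (x n) (x n) ^ 2) atTop (𝓝 1) :=
    by simpa using ((tendsto_add_atTop_iff_nat 1).mpr hconv).mul (hconv.pow 2)
  have hle : G p (F p) (F p) ≤ 1 := by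
    refine ge_of_tendsto' hlim fun n => ?_
    calc G p (F p) (F p) ≤ G p (x (n + 1)) (x (n + 1)) * G (x (n + 1)) (F p) (F p) :=
          hG.rect _ _ _ _
      _ ≤ G p (x (n + 1)) (x (n + 1)) * G (x n) p p := by
          rw [hxF n]
          gcongr
          · exact (hG.pos _ _ _).le
          · exact hF _ (hxs n) _ hps
      _ ≤ G p (x (n + 1)) (x (n + 1)) * G p (x n) (x n) ^ 2 := by
          gcongr
          · exact (hG.pos _ _ _).le
          · exact hG.apply_le_sq _ _
  exact (hG.eq_of_apply_eq_one (hle.antisymm (hG.one_le _ _ _))).symm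

theorem eq_of_isFixedPt (hG : IsMultGMetric G) {F : Z → Z} {η : ℝ} (hη : η < 1) {a b : Z}
    (hF : G (F a) (F b) (F b) ≤ G a b b ^ η) (ha : F a = a) (hb : F b = b) : a = b := by
  rw [ha, hb] at hF
  refine hG.eq_of_apply_eq_one ((hG.one_le a b b).eq_or_lt.resolve_right fun hlt => ?_).symm
  exact (Real.rpow_lt_self_of_one_lt hlt hη).not_ge hF

end IsMultGMetric

theorem theorem_3_1_general {L : Type*} [PartialOrder L]
    (G : L → L → L → ℝ) (hG : IsMultGMetric G) (hcomp : GMComplete G)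
    (F : L → L) (x₀ : L) (η γ : ℝ) (m : ℕ)
    (hη0 : 0 ≤ η) (hη1 : η < 1) (hγ : 0 < γ) (hm : 0 < m)
    (hcontr : ∀ x ∈ GMBall G x₀ γ, ∀ y ∈ GMBall G x₀ γ, ∀ z ∈ GMBall G x₀ γ,
      (G (F x) (F y) (F z)) ^ (1 / (m : ℝ)) ≤ ((G x y z) ^ (1 / (m : ℝ))) ^ η)
    (hstart : G x₀ (F x₀) (F x₀) ≤ γ ^ (1 - η)) :
    ∃ xs ∈ GMBall G x₀ γ, F xs = xs ∧ G xs xs xs = 1 ∧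
      ((∀ u ∈ GMBall G x₀ γ, ∀ v ∈ GMBall G x₀ γ,
          ∃ t ∈ GMBall G x₀ γ, t ≤ u ∧ t ≤ v) →
        ∀ y ∈ GMBall G x₀ γ, F y = y → y = xs) := by
  have hγ1 : 1 ≤ γ := by
    by_contra! h
    exact (Real.rpow_lt_one hγ.le h (by linarith)).not_ge ((hG.one_le _ _ _).trans hstart)
  have hF : ∀ a ∈ GMBall G x₀ γ, ∀ b ∈ GMBall G x₀ γ, G (F a) (F b) (F b) ≤ G a b b ^ η :=
    fun a ha b hb => le_rpow_of_rpow_one_div_le (hG.pos _ _ _).le (hG.pos _ _ _).le hm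
      (hcontr a ha b hb b hb)
  set x : ℕ → L := fun n => F^[n] x₀
  have hstep := hG.iterate_step_le hγ1 hη0 hF hstart
  have hx : ∀ n, x n ∈ GMBall G x₀ γ := fun n =>
    hG.mem_gmBall_of_step_le hγ1 hη0 fun i _ => hstep i
  have hbound : Tendsto (fun k => γ ^ η ^ k) atTop (𝓝 1) := by
    simpa [Function.comp_def] using (Real.continuousAt_const_rpow hγ.ne').tendsto.comp
      (tendsto_pow_atTop_nhds_zero_of_lt_one hη0 hη1)
  have hcauchy : GMCauchy G x := hG.gmCauchy_of_le hbound fun k j hkj =>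
    (hG.apply_le_rpow_of_step_le hγ hkj fun i _ _ => hstep i).trans
      (Real.rpow_le_rpow_of_exponent_le hγ1 (by linarith [pow_nonneg hη0 j]))
  obtain ⟨p, hp⟩ := hcomp x hcauchy
  have hpB := hG.mem_gmBall_of_gmConv hx hp
  have hfix : F p = p := hG.map_eq_of_gmConv
    (fun a ha b hb => (hF a ha b hb).trans (Real.rpow_le_self_of_one_le (hG.one_le _ _ _) hη1.le))
    hx (fun n => Function.iterate_succ_apply' F n x₀) hpB hp
  exact ⟨p, hpB, hfix, hG.eq_one p p p rfl rfl, fun _ y hy hFy =>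
    (hG.eq_of_isFixedPt hη1 (hF p hpB y hy) hfix hFy).symm⟩

theorem theorem_3_1 {L : Type*} [Nonempty L] [PartialOrder L]
    (G : L → L → L → ℝ) (hG : IsMultGMetric G) (hcomp : GMComplete G)
    (F : L → L) (x₀ : L) (η γ : ℝ) (m : ℕ)
    (hη0 : 0 ≤ η) (hη1 : η < 1) (hγ : 0 < γ) (hm : 0 < m)
    (hdec : ∀ x : L, F x ≤ x)
    (hcontr : ∀ x ∈ GMBall G x₀ γ, ∀ y ∈ GMBall G x₀ γ, ∀ z ∈ GMBall G x₀ γ,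
      (G (F x) (F y) (F z)) ^ (1 / (m : ℝ)) ≤ ((G x y z) ^ (1 / (m : ℝ))) ^ η)
    (hstart : G x₀ (F x₀) (F x₀) ≤ γ ^ (1 - η))
    (hmono : ∀ (x : ℕ → L) (s : L), (∀ n, x (n + 1) ≤ x n) → GMConv G x s →
      ∀ n, s ≤ x n) :
    ∃ xs ∈ GMBall G x₀ γ, F xs = xs ∧ G xs xs xs = 1 ∧
      ((∀ u ∈ GMBall G x₀ γ, ∀ v ∈ GMBall G x₀ γ,
          ∃ t ∈ GMBall G x₀ γ, t ≤ u ∧ t ≤ v) →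
        ∀ y ∈ GMBall G x₀ γ, F y = y → y = xs) :=
  theorem_3_1_general G hG hcomp F x₀ η γ m hη0 hη1 hγ hm hcontr hstart
end

section
/- (Corollary 3.4.) Let L be a nonempty set with a partial order ≼ and a multiplicative metric d such that (L, d) is complete. Let F : L → L, x₀ ∈ L, η ∈ [0,1), γ > 0, and let m be a positive integer. Assume: (i) F x ≼ x for every x ∈ L; (ii) d(Fx, Fy)^{1/m} ≤ (d(x,y)^{1/m})^η for all x, y in the closed ball B̄(x₀, γ); (iii) d(x₀, Fx₀) ≤ γ^{1−η}; (iv) whenever a nonincreasing sequence (x_n) multiplicative-converges to a point s, then s ≼ x_n for every n. Then there exists x* ∈ B̄(x₀, γ) with F x* = x* and d(x*, x*) = 1. Moreover, if every two points of B̄(x₀, γ) have a lower bound belonging to B̄(x₀, γ), then x* is the unique fixed point of F in B̄(x₀, γ). -/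
structure IsMultMetric {Z : Type*} (d : Z → Z → ℝ) : Prop where
  one_le : ∀ x y, 1 ≤ d x y
  eq_one_iff : ∀ x y, d x y = 1 ↔ x = y
  symm : ∀ x y, d x y = d y x
  triangle : ∀ x y z, d x y ≤ d x z * d z y

def MConv {Z : Type*} (d : Z → Z → ℝ) (x : ℕ → Z) (p : Z) : Prop :=
  Filter.Tendsto (fun n => d (x n) p) Filter.atTop (nhds 1)

def MCauchy {Z : Type*} (d : Z → Z → ℝ) (x : ℕ → Z) : Prop :=
  ∀ ε : ℝ, 1 < ε → ∃ N : ℕ, ∀ n ≥ N, ∀ m ≥ N, d (x n) (x m) < ε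

def MComplete {Z : Type*} (d : Z → Z → ℝ) : Prop :=
  ∀ x : ℕ → Z, MCauchy d x → ∃ p : Z, MConv d x p

def MBall {Z : Type*} (d : Z → Z → ℝ) (x₀ : Z) (γ : ℝ) : Set Z :=
  {y | d x₀ y ≤ γ}

/-!
Taking logarithms turns the multiplicative metric `d` into an ordinary complete metric `log ∘ d`.
For it, `B̄(x₀, γ)` is the closed ball of radius `log γ`, hypothesis (ii) says that `F` is
`η`-Lipschitz there, and (iii) says `dist x₀ (F x₀) ≤ (1 - η) log γ`, which makes `F` map the
ball into itself. The Banach fixed point theorem on this complete ball gives a fixed point that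
is unique in the ball.
-/

open Real Filter Topology Metric Set Function

theorem existsUnique_isFixedPt_mem_closedBall {α : Type*} [MetricSpace α] [CompleteSpace α]
    {f : α → α} {x₀ : α} {K r : ℝ} (hK₀ : 0 ≤ K) (hK₁ : K < 1)
    (hf : ∀ x ∈ closedBall x₀ r, ∀ y ∈ closedBall x₀ r, dist (f x) (f y) ≤ K * dist x y)
    (hx₀ : dist x₀ (f x₀) ≤ (1 - K) * r) :
    ∃! x, x ∈ closedBall x₀ r ∧ IsFixedPt f x := by
  have hr : 0 ≤ r := nonneg_of_mul_nonneg_right (dist_nonneg.trans hx₀) (by linarith)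
  have hmaps : MapsTo f (closedBall x₀ r) (closedBall x₀ r) := fun x hx => calc
    dist (f x) x₀ ≤ dist (f x) (f x₀) + dist x₀ (f x₀) := dist_triangle_right _ _ _
    _ ≤ K * r + (1 - K) * r := by
      gcongr
      exact (hf x hx x₀ (mem_closedBall_self hr)).trans (mul_le_mul_of_nonneg_left hx hK₀)
    _ = r := by ring
  have : CompleteSpace (closedBall x₀ r) := isClosed_closedBall.completeSpace_coe
  have : Nonempty (closedBall x₀ r) := ⟨⟨x₀, mem_closedBall_self hr⟩⟩
  have hcontr : ContractingWith ⟨K, hK₀⟩ (hmaps.restrict f _ _) :=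
    ⟨hK₁, LipschitzWith.of_dist_le_mul fun x y => hf x x.2 y y.2⟩
  refine ⟨ContractingWith.fixedPoint (α := closedBall x₀ r) _ hcontr, ⟨Subtype.coe_prop _,
    congrArg Subtype.val (ContractingWith.fixedPoint_isFixedPt hcontr)⟩, ?_⟩
  rintro x ⟨hx, hfx⟩
  exact congrArg Subtype.val (hcontr.fixedPoint_unique (x := ⟨x, hx⟩) (Subtype.ext hfx))

theorem log_le_mul_log_of_rpow_le {a b c η : ℝ} (ha : 0 < a) (hb : 0 < b) (hc : 0 < c)
    (h : a ^ c ≤ (b ^ c) ^ η) : log a ≤ η * log b := by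
  have h := log_le_log (by positivity) h
  rw [log_rpow ha, log_rpow (by positivity), log_rpow hb, mul_left_comm] at h
  exact le_of_mul_le_mul_left h hc

namespace IsMultMetric

variable {Z : Type*} {d : Z → Z → ℝ}

theorem pos (hd : IsMultMetric d) (x y : Z) : 0 < d x y := one_pos.trans_le (hd.one_le x y)

theorem self_eq_one (hd : IsMultMetric d) (x : Z) : d x x = 1 := (hd.eq_one_iff x x).2 rfl

noncomputable abbrev toMetricSpace (hd : IsMultMetric d) : MetricSpace Z where
  dist x y := log (d x y)
  dist_self x := by simp [hd.self_eq_one]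
  dist_comm x y := by rw [hd.symm]
  dist_triangle x y z := by
    rw [← log_mul (hd.pos x y).ne' (hd.pos y z).ne']
    exact log_le_log (hd.pos x z) (hd.triangle x z y)
  eq_of_dist_eq_zero {x y} h := by
    rw [← hd.eq_one_iff]
    exact eq_one_of_pos_of_log_eq_zero (hd.pos x y) h

theorem tendsto_of_mConv (hd : IsMultMetric d) {x : ℕ → Z} {p : Z} (h : MConv d x p) :
    letI := hd.toMetricSpace; Tendsto x atTop (𝓝 p) := by
  let := hd.toMetricSpace
  rw [tendsto_iff_dist_tendsto_zero, ← log_one]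
  exact ((continuousAt_log one_ne_zero).tendsto).comp h

theorem mCauchy_of_cauchySeq (hd : IsMultMetric d) {x : ℕ → Z} :
    letI := hd.toMetricSpace; CauchySeq x → MCauchy d x := by
  let := hd.toMetricSpace
  intro h ε hε
  obtain ⟨N, hN⟩ := Metric.cauchySeq_iff.1 h (log ε) (log_pos hε)
  exact ⟨N, fun n hn k hk => (log_lt_log_iff (hd.pos _ _) (by linarith)).1 (hN n hn k hk)⟩

theorem completeSpace (hd : IsMultMetric d) (hc : MComplete d) :
    letI := hd.toMetricSpace; CompleteSpace Z := by
  let := hd.toMetricSpace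
  refine Metric.complete_of_cauchySeq_tendsto fun x hx => ?_
  obtain ⟨p, hp⟩ := hc x (hd.mCauchy_of_cauchySeq hx)
  exact ⟨p, hd.tendsto_of_mConv hp⟩

theorem mBall_eq_closedBall (hd : IsMultMetric d) (x₀ : Z) {γ : ℝ} (hγ : 0 < γ) :
    letI := hd.toMetricSpace; MBall d x₀ γ = closedBall x₀ (log γ) := by
  let := hd.toMetricSpace
  ext y
  rw [mem_closedBall, dist_comm]
  exact (log_le_log_iff (hd.pos x₀ y) hγ).symm

end IsMultMetric

theorem corollary_3_4_general {L : Type*} [PartialOrder L]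
    (d : L → L → ℝ) (hd : IsMultMetric d) (hcomp : MComplete d)
    (F : L → L) (x₀ : L) (η γ : ℝ) (m : ℕ)
    (hη0 : 0 ≤ η) (hη1 : η < 1) (hγ : 0 < γ) (hm : 0 < m)
    (hcontr : ∀ x ∈ MBall d x₀ γ, ∀ y ∈ MBall d x₀ γ,
      (d (F x) (F y)) ^ (1 / (m : ℝ)) ≤ ((d x y) ^ (1 / (m : ℝ))) ^ η)
    (hstart : d x₀ (F x₀) ≤ γ ^ (1 - η)) :
    ∃ xs ∈ MBall d x₀ γ, F xs = xs ∧ d xs xs = 1 ∧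
      ((∀ u ∈ MBall d x₀ γ, ∀ v ∈ MBall d x₀ γ,
          ∃ t ∈ MBall d x₀ γ, t ≤ u ∧ t ≤ v) →
        ∀ y ∈ MBall d x₀ γ, F y = y → y = xs) := by
  let := hd.toMetricSpace
  have := hd.completeSpace hcomp
  have hball := hd.mBall_eq_closedBall x₀ hγ
  have hlip : ∀ x ∈ closedBall x₀ (log γ), ∀ y ∈ closedBall x₀ (log γ),
      dist (F x) (F y) ≤ η * dist x y := by
    rw [← hball]
    exact fun x hx y hy => log_le_mul_log_of_rpow_le (hd.pos _ _) (hd.pos _ _)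
      (one_div_pos.2 (Nat.cast_pos.2 hm)) (hcontr x hx y hy)
  have hstart' : dist x₀ (F x₀) ≤ (1 - η) * log γ := by
    rw [← log_rpow hγ]
    exact log_le_log (hd.pos _ _) hstart
  obtain ⟨xs, ⟨hxs, hfix⟩, huniq⟩ :=
    existsUnique_isFixedPt_mem_closedBall hη0 hη1 hlip hstart'
  rw [← hball] at hxs huniq
  exact ⟨xs, hxs, hfix, hd.self_eq_one xs, fun _ y hy hFy => huniq y ⟨hy, hFy⟩⟩

theorem corollary_3_4 {L : Type*} [Nonempty L] [PartialOrder L]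
    (d : L → L → ℝ) (hd : IsMultMetric d) (hcomp : MComplete d)
    (F : L → L) (x₀ : L) (η γ : ℝ) (m : ℕ)
    (hη0 : 0 ≤ η) (hη1 : η < 1) (hγ : 0 < γ) (hm : 0 < m)
    (hdec : ∀ x : L, F x ≤ x)
    (hcontr : ∀ x ∈ MBall d x₀ γ, ∀ y ∈ MBall d x₀ γ,
      (d (F x) (F y)) ^ (1 / (m : ℝ)) ≤ ((d x y) ^ (1 / (m : ℝ))) ^ η)
    (hstart : d x₀ (F x₀) ≤ γ ^ (1 - η))
    (hmono : ∀ (x : ℕ → L) (s : L), (∀ n, x (n + 1) ≤ x n) → MConv d x s →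
      ∀ n, s ≤ x n) :
    ∃ xs ∈ MBall d x₀ γ, F xs = xs ∧ d xs xs = 1 ∧
      ((∀ u ∈ MBall d x₀ γ, ∀ v ∈ MBall d x₀ γ,
          ∃ t ∈ MBall d x₀ γ, t ≤ u ∧ t ≤ v) →
        ∀ y ∈ MBall d x₀ γ, F y = y → y = xs) :=
  corollary_3_4_general d hd hcomp F x₀ η γ m hη0 hη1 hγ hm hcontr hstart
end

section
/- (Example 3.3, Step 2: failure of the contraction off the small interval.) On Z = [0, ∞) ⊆ ℝ define G(x,y,z) = exp(|x − y| + |y − z| + |z − x|), and define F : Z → Z by F x = x/4 if 0 ≤ x < 1/3 and F x = x − 1/3 if x ≥ 1/3. Then for all x, y, z ∈ [1/3, ∞) one has G(Fx, Fy, Fz) = G(x, y, z) ≥ G(x, y, z)^{5/8}, and the inequality G(Fx, Fy, Fz) ≤ G(x, y, z)^{5/8} fails whenever x, y, z ∈ [1/3, ∞) are not all equal. -/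
/-! Above `1/3` the map `F33` is the translation `x ↦ x - 1/3`, which preserves the
perimeter `|x - y| + |y - z| + |z - x|` and hence `Gexp`. Since `Gexp ≥ 1`, with equality
only on the diagonal, raising it to the power `5/8 < 1` can only decrease it, strictly off
the diagonal. -/

noncomputable def Gexp : ℝ → ℝ → ℝ → ℝ :=
  fun x y z => Real.exp (|x - y| + |y - z| + |z - x|)

noncomputable def F33 : ℝ → ℝ :=
  fun x => if x < 1 / 3 then x / 4 else x - 1 / 3

lemma F33_of_le {x : ℝ} (hx : 1 / 3 ≤ x) : F33 x = x - 1 / 3 :=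
  if_neg hx.not_gt

lemma Gexp_sub_const (x y z c : ℝ) : Gexp (x - c) (y - c) (z - c) = Gexp x y z := by
  simp only [Gexp, sub_sub_sub_cancel_right]

lemma one_le_Gexp (x y z : ℝ) : 1 ≤ Gexp x y z :=
  Real.one_le_exp (by positivity)

lemma one_lt_Gexp {x y z : ℝ} (h : ¬(x = y ∧ y = z)) : 1 < Gexp x y z := by
  refine Real.one_lt_exp_iff.mpr (lt_of_le_of_ne (by positivity) fun hsum => h ?_)
  have := abs_nonneg (x - y); have := abs_nonneg (y - z); have := abs_nonneg (z - x)
  have hxy : |x - y| = 0 := by linarith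
  have hyz : |y - z| = 0 := by linarith
  exact ⟨sub_eq_zero.mp (abs_eq_zero.mp hxy), sub_eq_zero.mp (abs_eq_zero.mp hyz)⟩

lemma Gexp_F33_of_le {x y z : ℝ} (hx : 1 / 3 ≤ x) (hy : 1 / 3 ≤ y) (hz : 1 / 3 ≤ z) :
    Gexp (F33 x) (F33 y) (F33 z) = Gexp x y z := by
  rw [F33_of_le hx, F33_of_le hy, F33_of_le hz, Gexp_sub_const]

theorem example_3_3_step2 :
    (∀ x y z : ℝ, 1 / 3 ≤ x → 1 / 3 ≤ y → 1 / 3 ≤ z →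
      Gexp (F33 x) (F33 y) (F33 z) = Gexp x y z ∧
      (Gexp x y z) ^ ((5 : ℝ) / 8) ≤ Gexp x y z) ∧
    (∀ x y z : ℝ, 1 / 3 ≤ x → 1 / 3 ≤ y → 1 / 3 ≤ z → ¬(x = y ∧ y = z) →
      ¬ Gexp (F33 x) (F33 y) (F33 z) ≤ (Gexp x y z) ^ ((5 : ℝ) / 8)) := by
  refine ⟨fun x y z hx hy hz => ⟨Gexp_F33_of_le hx hy hz, ?_⟩,
    fun x y z hx hy hz hne => ?_⟩
  · exact Real.rpow_le_self_of_one_le (one_le_Gexp x y z) (by norm_num)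
  · rw [Gexp_F33_of_le hx hy hz, not_le]
    exact Real.rpow_lt_self_of_one_lt (one_lt_Gexp hne) (by norm_num)
end
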